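/- arXiv:1111.4244 — 4 statements merged into one kernel-verified Lean document; each statement's English description precedes it below -/
import Mathlib

section
/- Let V be a finite index set and for each i ∈ V let M_i be a matrix (over ℂ) with a fixed number of columns, viewed as assigning to each cut Ω ⊆ V the block matrix Λ_Ω formed from the submatrix of a fixed global matrix H with rows indexed by V \ Ω and columns indexed by Ω. Then the function D(Ω) = rank(Λ_Ω) is submodular in Ω: for all A, B ⊆ V, rank(Λ_A) + rank(Λ_B) ≥ rank(Λ_{A∪B}) + rank(Λ_{A∩B}). -/
/-!
Let `C_Ω` be the span of the columns of `H` indexed by `Ω` and `E_Ω` the span of the unit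
vectors `e_j`, `j ∈ Ω`, which is the kernel of the restriction to the coordinates in `V \ Ω`.
Rank–nullity for that restriction on `C_Ω + E_Ω` gives `rank Λ_Ω + |Ω| = dim (C_Ω + E_Ω)`.
The map `Ω ↦ C_Ω + E_Ω` preserves unions and is monotone, so by the modular law
`dim (U + W) + dim (U ∩ W) = dim U + dim W` its dimension is submodular; `|Ω|` is modular.
-/

open Module Submodule

theorem Submodule.finrank_map_add_finrank_ker_of_ker_le {K M N : Type*} [DivisionRing K]
    [AddCommGroup M] [Module K M] [AddCommGroup N] [Module K N] (f : M →ₗ[K] N)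
    {p : Submodule K M} [FiniteDimensional K p] (h : LinearMap.ker f ≤ p) :
    finrank K (p.map f) + finrank K (LinearMap.ker f) = finrank K p := by
  rw [← LinearMap.range_domRestrict, ← (comapSubtypeEquivOfLe h).finrank_eq,
    ← LinearMap.ker_domRestrict]
  exact LinearMap.finrank_range_add_finrank_ker _

theorem Submodule.map_sup_ker {K M N : Type*} [Semiring K] [AddCommGroup M] [Module K M]
    [AddCommGroup N] [Module K N] (f : M →ₗ[K] N) (p : Submodule K M) :
    (p ⊔ LinearMap.ker f).map f = p.map f := by
  rw [Submodule.map_sup, LinearMap.le_ker_iff_map.mp le_rfl, sup_bot_eq]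

theorem SupHom.finrank_map_sup_add_finrank_map_inf_le {α K M : Type*} [Lattice α]
    [DivisionRing K] [AddCommGroup M] [Module K M] [FiniteDimensional K M]
    (W : SupHom α (Submodule K M)) (a b : α) :
    finrank K (W (a ⊔ b)) + finrank K (W (a ⊓ b)) ≤ finrank K (W a) + finrank K (W b) := by
  have hinf : W (a ⊓ b) ≤ W a ⊓ W b :=
    le_inf (OrderHomClass.mono W inf_le_left) (OrderHomClass.mono W inf_le_right)
  calc finrank K (W (a ⊔ b)) + finrank K (W (a ⊓ b))
      ≤ finrank K ↥(W a ⊔ W b) + finrank K ↥(W a ⊓ W b) := by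
        rw [SupHomClass.map_sup]
        exact Nat.add_le_add_left (finrank_mono hinf) _
    _ = finrank K (W a) + finrank K (W b) := finrank_sup_add_finrank_inf_eq _ _

section Restrict

variable (K : Type*) [DivisionRing K] {V : Type*}

noncomputable def Finset.restrictLinear (s : Finset V) : (V → K) →ₗ[K] ({x // x ∈ s} → K) :=
  LinearMap.funLeft K K Subtype.val

theorem Finset.restrictLinear_surjective (s : Finset V) :
    Function.Surjective (s.restrictLinear K) :=
  LinearMap.funLeft_surjective_of_injective K K _ Subtype.val_injective

theorem Finset.ker_restrictLinear_compl [Fintype V] [DecidableEq V] (s : Finset V) :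
    LinearMap.ker (sᶜ.restrictLinear K)
      = ⨆ i ∈ (s : Set V), LinearMap.range (LinearMap.single K (fun _ => K) i) := by
  rw [LinearMap.iSup_range_single_eq_iInf_ker_proj K (fun _ => K) isCompl_compl s.finite_toSet]
  ext x
  simp [Finset.restrictLinear, funext_iff, LinearMap.funLeft_apply]

theorem Finset.finrank_ker_restrictLinear_compl [Fintype V] [DecidableEq V] (s : Finset V) :
    finrank K (LinearMap.ker (sᶜ.restrictLinear K)) = s.card := by
  have h := LinearMap.finrank_range_add_finrank_ker (sᶜ.restrictLinear K)
  rw [LinearMap.range_eq_top.mpr (sᶜ.restrictLinear_surjective K), finrank_top, finrank_pi,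
    finrank_pi, Fintype.card_coe, Finset.card_compl] at h
  have := s.card_le_univ
  omega

end Restrict

section Matrix

variable {K : Type*} [Field K]

theorem Matrix.rank_submatrix_subtype_eq_finrank_map {m n : Type*} [Fintype n]
    (A : Matrix m n K) (r : Finset m) (c : Finset n) :
    (A.submatrix (fun i : {x // x ∈ r} => (i : m)) (fun j : {x // x ∈ c} => (j : n))).rank
      = finrank K ((span K (A.col '' c)).map (r.restrictLinear K)) := by
  have hcols : Set.range (A.submatrix (fun i : {x // x ∈ r} => (i : m))
      (fun j : {x // x ∈ c} => (j : n))).col = r.restrictLinear K '' (A.col '' c) := by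
    ext y
    constructor
    · rintro ⟨j, rfl⟩
      exact ⟨A.col j, ⟨j, j.2, rfl⟩, rfl⟩
    · rintro ⟨_, ⟨j, hj, rfl⟩, rfl⟩
      exact ⟨⟨j, hj⟩, rfl⟩
  rw [Matrix.rank_eq_finrank_span_cols, hcols, span_image]

variable {V : Type*} [Fintype V] [DecidableEq V]

noncomputable def Matrix.augmentedColSpan (H : Matrix V V K) :
    SupHom (Finset V) (Submodule K (V → K)) where
  toFun s := span K (H.col '' s) ⊔
    ⨆ i ∈ (s : Set V), LinearMap.range (LinearMap.single K (fun _ => K) i)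
  map_sup' a b := by
    simp only [Finset.sup_eq_union, Finset.coe_union, Set.image_union, span_union, iSup_union]
    exact sup_sup_sup_comm _ _ _ _

theorem Matrix.rank_submatrix_compl_add_card (H : Matrix V V K) (s : Finset V) :
    (H.submatrix (fun i : {x // x ∈ sᶜ} => (i : V)) (fun j : {x // x ∈ s} => (j : V))).rank
      + s.card = finrank K (H.augmentedColSpan s) := by
  rw [rank_submatrix_subtype_eq_finrank_map, ← s.finrank_ker_restrictLinear_compl K,
    augmentedColSpan, SupHom.coe_mk, ← s.ker_restrictLinear_compl K, ← map_sup_ker]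
  exact finrank_map_add_finrank_ker_of_ker_le _ le_sup_right

end Matrix

/-- For a fixed matrix `H` indexed by a finite node set `V`, the function
`D(Ω) = rank(Λ_Ω)`, where `Λ_Ω` is the submatrix of `H` with rows indexed by `V \ Ω`
and columns indexed by `Ω`, is submodular. -/
theorem stmt_1 {V : Type*} [Fintype V] [DecidableEq V] (H : Matrix V V ℂ)
    (D : Finset V → ℕ)
    (hD : ∀ Ω : Finset V,
      D Ω = (H.submatrix (fun i : {x // x ∈ Ωᶜ} => (i : V))
        (fun j : {x // x ∈ Ω} => (j : V))).rank) :
    ∀ A B : Finset V, D (A ∪ B) + D (A ∩ B) ≤ D A + D B := by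
  intro A B
  have hW := H.augmentedColSpan.finrank_map_sup_add_finrank_map_inf_le A B
  rw [Finset.sup_eq_union, Finset.inf_eq_inter] at hW
  have hA := H.rank_submatrix_compl_add_card A
  have hB := H.rank_submatrix_compl_add_card B
  have hAB := H.rank_submatrix_compl_add_card (A ∪ B)
  have hAiB := H.rank_submatrix_compl_add_card (A ∩ B)
  have hcard := Finset.card_union_add_card_inter A B
  simp only [hD]
  omega
end

section
/- Let X₁,…,Xₙ, Y₁,…,Yₙ be finitely-valued random variables such that X₁,…,Xₙ are mutually independent and, conditioned on (X₁,…,Xₙ), the variables Y₁,…,Yₙ are mutually independent. Then the function F(A) = I(X_A ; Y_{Aᶜ} | X_{Aᶜ}) on subsets A of {1,…,n} is submodular. -/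
open Finset

/-- Probability that the random variable `Z` takes the value `z`. -/
noncomputable def prob' {Ω : Type*} [Fintype Ω] (μ : Ω → ℝ) {α : Type*} [DecidableEq α]
    (Z : Ω → α) (z : α) : ℝ :=
  ∑ ω ∈ Finset.univ.filter (fun ω => Z ω = z), μ ω

/-- Shannon entropy (base 2) of a finitely-valued random variable. -/
noncomputable def ent' {Ω : Type*} [Fintype Ω] (μ : Ω → ℝ) {α : Type*} [Fintype α]
    [DecidableEq α] (Z : Ω → α) : ℝ :=
  -∑ z : α, prob' μ Z z * Real.logb 2 (prob' μ Z z)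

/-- Conditional Shannon entropy `H(Z | W) = H(Z, W) − H(W)`. -/
noncomputable def condEnt' {Ω : Type*} [Fintype Ω] (μ : Ω → ℝ) {α β : Type*}
    [Fintype α] [DecidableEq α] [Fintype β] [DecidableEq β]
    (Z : Ω → α) (W : Ω → β) : ℝ :=
  ent' μ (fun ω => (Z ω, W ω)) - ent' μ W

/-- Conditional mutual information `I(X ; Y | Z) = H(X|Z) + H(Y|Z) − H(X,Y|Z)`. -/
noncomputable def condMI' {Ω : Type*} [Fintype Ω] (μ : Ω → ℝ) {α β γ : Type*}
    [Fintype α] [DecidableEq α] [Fintype β] [DecidableEq β] [Fintype γ] [DecidableEq γ]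
    (X : Ω → α) (Y : Ω → β) (Z : Ω → γ) : ℝ :=
  condEnt' μ X Z + condEnt' μ Y Z - condEnt' μ (fun ω => (X ω, Y ω)) Z

/-!
Unfolding the conditional mutual information gives
`F(A) = H(X_{Aᶜ}, Y_{Aᶜ}) + H(X) - H(X_{Aᶜ}) - H(X, Y_{Aᶜ})`. Independence of the `X_i` makes
`H(X_{Aᶜ}) = ∑_{j ∈ Aᶜ} H(X_j)`, and conditional independence of the `Y_j` given `X` makes
`H(X, Y_{Aᶜ}) = H(X) + ∑_{j ∈ Aᶜ} (H(Y_j, X) - H(X))`; both follow from the product formulas for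
the probabilities because an entropy is the `μ`-mean of `-log₂ P(Z = Z(ω))`. So `F` is
`S ↦ H((X_j, Y_j)_{j ∈ S})` composed with complementation, minus a modular function, and
`S ↦ H(Z_S)` is submodular since `H(Z_S) + H(Z_T) - H(Z_{S ∪ T}) - H(Z_{S ∩ T})` is the
conditional mutual information `I(Z_{S \ T} ; Z_{T \ S} | Z_{S ∩ T}) ≥ 0` (Gibbs' inequality).
-/

section Submodular

variable {ι : Type*} [DecidableEq ι]

def IsSubmodular (f : Finset ι → ℝ) : Prop :=
  ∀ s t, f (s ∪ t) + f (s ∩ t) ≤ f s + f t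

theorem IsSubmodular.sub_sum {f : Finset ι → ℝ} (hf : IsSubmodular f) (c : ι → ℝ) :
    IsSubmodular fun s => f s - ∑ i ∈ s, c i := fun s t => by
  linarith [hf s t, sum_union_inter (s₁ := s) (s₂ := t) (f := c)]

theorem IsSubmodular.comp_compl [Fintype ι] {f : Finset ι → ℝ} (hf : IsSubmodular f) :
    IsSubmodular fun s => f sᶜ := fun s t => by
  simp only [compl_union, compl_inter]
  linarith [hf sᶜ tᶜ]

end Submodular

theorem sum_prod_of_restrict_eq {ι κ R : Type*} [Fintype ι] [DecidableEq ι] [Fintype κ]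
    [DecidableEq κ] [CommSemiring R] (S : Finset ι) (g : S → κ) (p : ι → κ → R) :
    ∑ y ∈ univ.filter (fun y : ι → κ => (fun j : S => y j) = g), ∏ i, p i (y i)
      = (∏ j : S, p j (g j)) * ∏ i ∈ Sᶜ, ∑ t, p i t := by
  set t : ι → Finset κ := fun i => if h : i ∈ S then {g ⟨i, h⟩} else univ
  have hfilter : univ.filter (fun y : ι → κ => (fun j : S => y j) = g) = Fintype.piFinset t := by
    ext y
    simp only [mem_filter, mem_univ, true_and, Fintype.mem_piFinset, funext_iff, Subtype.forall, t]
    refine ⟨fun h i => ?_, fun h i hi => by simpa [hi] using h i⟩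
    by_cases hi : i ∈ S <;> simp [hi, h]
  rw [hfilter, ← prod_univ_sum, ← prod_mul_prod_compl S, ← prod_coe_sort S]
  congr 1
  · exact prod_congr rfl fun j _ => by simp [t]
  · exact prod_congr rfl fun i hi => by simp [t, mem_compl.mp hi]

theorem sum_mul_logb_nonpos {ι : Type*} (s : Finset ι) {p r : ι → ℝ} (hp : ∀ i, 0 ≤ p i)
    (hr : ∀ i, 0 < p i → 0 < r i) (hsum : ∑ i ∈ s, p i * r i ≤ ∑ i ∈ s, p i) :
    ∑ i ∈ s, p i * Real.logb 2 (r i) ≤ 0 := by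
  have hlog2 : 0 < Real.log 2 := Real.log_pos one_lt_two
  have hpoint : ∀ i, p i * Real.logb 2 (r i) ≤ (p i * r i - p i) / Real.log 2 := by
    intro i
    rcases (hp i).eq_or_lt with h0 | hpos
    · simp [← h0]
    · rw [Real.logb, le_div_iff₀ hlog2, mul_assoc, div_mul_cancel₀ _ hlog2.ne']
      linarith [mul_le_mul_of_nonneg_left (Real.log_le_sub_one_of_pos (hr i hpos)) (hp i)]
  calc ∑ i ∈ s, p i * Real.logb 2 (r i)
      ≤ ∑ i ∈ s, (p i * r i - p i) / Real.log 2 := sum_le_sum fun i _ => hpoint i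
    _ = (∑ i ∈ s, p i * r i - ∑ i ∈ s, p i) / Real.log 2 := by rw [← sum_div, sum_sub_distrib]
    _ ≤ 0 := div_nonpos_of_nonpos_of_nonneg (by linarith) hlog2.le

section Probability

variable {Ω : Type*} [Fintype Ω] (μ : Ω → ℝ)

theorem prob'_nonneg (hμ0 : ∀ ω, 0 ≤ μ ω) {α : Type*} [DecidableEq α] (Z : Ω → α) (z : α) :
    0 ≤ prob' μ Z z :=
  sum_nonneg fun ω _ => hμ0 ω

theorem le_prob'_self (hμ0 : ∀ ω, 0 ≤ μ ω) {α : Type*} [DecidableEq α] (Z : Ω → α) (ω : Ω) :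
    μ ω ≤ prob' μ Z (Z ω) :=
  single_le_sum (fun ω' _ => hμ0 ω') (by simp)

theorem prob'_self_pos (hμ0 : ∀ ω, 0 ≤ μ ω) {δ : Type*} [DecidableEq δ] (Z : Ω → δ) {ω : Ω}
    (hω : 0 < μ ω) : 0 < prob' μ Z (Z ω) :=
  hω.trans_le (le_prob'_self μ hμ0 Z ω)

theorem prob'_congr {α β : Type*} [DecidableEq α] [DecidableEq β] {Z : Ω → α} {W : Ω → β}
    {z : α} {w : β} (h : ∀ ω, Z ω = z ↔ W ω = w) : prob' μ Z z = prob' μ W w := by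
  unfold prob'
  rw [filter_congr fun ω _ => h ω]

theorem sum_prob'_mul {α : Type*} [Fintype α] [DecidableEq α] (Z : Ω → α) (f : α → ℝ) :
    ∑ z, prob' μ Z z * f z = ∑ ω, μ ω * f (Z ω) := by
  simp_rw [prob', sum_mul, ← sum_fiberwise univ Z fun ω => μ ω * f (Z ω)]
  exact sum_congr rfl fun z _ => sum_congr rfl fun ω hω => by rw [(mem_filter.1 hω).2]

theorem sum_prob' {α : Type*} [Fintype α] [DecidableEq α] (Z : Ω → α) :
    ∑ z, prob' μ Z z = ∑ ω, μ ω := by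
  simpa using sum_prob'_mul μ Z 1

theorem sum_prob'_prodMk_left {α β : Type*} [Fintype α] [DecidableEq α] [DecidableEq β]
    (A : Ω → α) (B : Ω → β) (b : β) :
    ∑ a, prob' μ (fun ω => (A ω, B ω)) (a, b) = prob' μ B b := by
  unfold prob'
  rw [← sum_fiberwise (univ.filter fun ω => B ω = b) A]
  simp only [filter_filter, Prod.mk.injEq, and_comm]

theorem prob'_comp {α β : Type*} [Fintype α] [DecidableEq α] [DecidableEq β]
    (Z : Ω → α) (f : α → β) (y : β) :
    prob' μ (fun ω => f (Z ω)) y = ∑ z ∈ univ.filter (f · = y), prob' μ Z z := by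
  unfold prob'
  rw [← sum_fiberwise_of_maps_to (g := Z) (t := univ.filter (f · = y)) (by simp)]
  refine sum_congr rfl fun z hz => ?_
  rw [filter_filter]
  exact sum_congr (filter_congr fun ω _ => by simp_all [and_iff_right_iff_imp]) fun _ _ => rfl

theorem prob'_prodMk_comp_right {α β γ : Type*} [DecidableEq α] [Fintype β] [DecidableEq β]
    [DecidableEq γ] (A : Ω → α) (B : Ω → β) (f : β → γ) (a : α) (c : γ) :
    prob' μ (fun ω => (A ω, f (B ω))) (a, c)
      = ∑ b ∈ univ.filter (f · = c), prob' μ (fun ω => (A ω, B ω)) (a, b) := by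
  unfold prob'
  rw [← sum_fiberwise_of_maps_to (g := B) (t := univ.filter (f · = c)) (by simp)]
  refine sum_congr rfl fun b hb => ?_
  rw [filter_filter]
  exact sum_congr (filter_congr fun ω _ => by aesop) fun _ _ => rfl

theorem ent'_eq_neg_sum {α : Type*} [Fintype α] [DecidableEq α] (Z : Ω → α) :
    ent' μ Z = -∑ ω, μ ω * Real.logb 2 (prob' μ Z (Z ω)) := by
  rw [ent', sum_prob'_mul μ Z fun z => Real.logb 2 (prob' μ Z z)]

theorem ent'_congr {α β : Type*} [Fintype α] [DecidableEq α] [Fintype β] [DecidableEq β]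
    {Z : Ω → α} {W : Ω → β} (h : ∀ ω ω', Z ω = Z ω' ↔ W ω = W ω') : ent' μ Z = ent' μ W := by
  simp only [ent'_eq_neg_sum, prob'_congr μ fun ω' => h ω' _]

theorem sum_mul_congr_of_pos (hμ0 : ∀ ω, 0 ≤ μ ω) {f g : Ω → ℝ}
    (h : ∀ ω, 0 < μ ω → f ω = g ω) : ∑ ω, μ ω * f ω = ∑ ω, μ ω * g ω := by
  refine sum_congr rfl fun ω _ => ?_
  rcases (hμ0 ω).eq_or_lt with h0 | hpos
  · simp [← h0]
  · rw [h ω hpos]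

end Probability

/-- The likelihood ratio of `P(u | w) P(v | w) P(w)` against `P(u, v, w)` at the outcome `ω`. -/
noncomputable def condProdRatio' {Ω : Type*} [Fintype Ω] (μ : Ω → ℝ) {α β γ : Type*}
    [DecidableEq α] [DecidableEq β] [DecidableEq γ] (U : Ω → α) (V : Ω → β) (W : Ω → γ)
    (ω : Ω) : ℝ :=
  prob' μ (fun ω => (U ω, W ω)) (U ω, W ω) * prob' μ (fun ω => (V ω, W ω)) (V ω, W ω) /
    (prob' μ (fun ω => ((U ω, V ω), W ω)) ((U ω, V ω), W ω) * prob' μ W (W ω))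

section MutualInformation

variable {Ω : Type*} [Fintype Ω] (μ : Ω → ℝ) {α β γ : Type*} [DecidableEq α] [DecidableEq β]
  [DecidableEq γ] (U : Ω → α) (V : Ω → β) (W : Ω → γ)

theorem condProdRatio'_pos (hμ0 : ∀ ω, 0 ≤ μ ω) {ω : Ω} (hω : 0 < μ ω) :
    0 < condProdRatio' μ U V W ω :=
  div_pos (mul_pos (prob'_self_pos μ hμ0 _ hω) (prob'_self_pos μ hμ0 _ hω))
    (mul_pos (prob'_self_pos μ hμ0 _ hω) (prob'_self_pos μ hμ0 W hω))

variable [Fintype α] [Fintype β] [Fintype γ]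

theorem condMI'_eq_neg_sum (hμ0 : ∀ ω, 0 ≤ μ ω) :
    condMI' μ U V W = -∑ ω, μ ω * Real.logb 2 (condProdRatio' μ U V W ω) := by
  have hlog : ∀ ω, 0 < μ ω → Real.logb 2 (condProdRatio' μ U V W ω)
      = Real.logb 2 (prob' μ (fun ω => (U ω, W ω)) (U ω, W ω))
        + Real.logb 2 (prob' μ (fun ω => (V ω, W ω)) (V ω, W ω))
        - Real.logb 2 (prob' μ (fun ω => ((U ω, V ω), W ω)) ((U ω, V ω), W ω))
        - Real.logb 2 (prob' μ W (W ω)) := fun ω hω => by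
    have ha := (prob'_self_pos μ hμ0 (fun ω => (U ω, W ω)) hω).ne'
    have hb := (prob'_self_pos μ hμ0 (fun ω => (V ω, W ω)) hω).ne'
    have hq := (prob'_self_pos μ hμ0 (fun ω => ((U ω, V ω), W ω)) hω).ne'
    have hc := (prob'_self_pos μ hμ0 W hω).ne'
    rw [condProdRatio', Real.logb_div (mul_ne_zero ha hb) (mul_ne_zero hq hc),
      Real.logb_mul ha hb, Real.logb_mul hq hc]
    ring
  rw [sum_mul_congr_of_pos μ hμ0 hlog]
  simp only [condMI', condEnt', ent'_eq_neg_sum, mul_add, mul_sub, sum_add_distrib,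
    sum_sub_distrib]
  ring

theorem sum_mul_condProdRatio'_le (hμ0 : ∀ ω, 0 ≤ μ ω) :
    ∑ ω, μ ω * condProdRatio' μ U V W ω ≤ ∑ ω, μ ω := by
  set T : Ω → (α × β) × γ := fun ω => ((U ω, V ω), W ω)
  set a := prob' μ fun ω => (U ω, W ω) with ha
  set b := prob' μ fun ω => (V ω, W ω) with hb
  set c := prob' μ W
  calc ∑ ω, μ ω * condProdRatio' μ U V W ω
      = ∑ z, prob' μ T z * (a (z.1.1, z.2) * b (z.1.2, z.2) / (prob' μ T z * c z.2)) :=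
        (sum_prob'_mul μ T fun z => a (z.1.1, z.2) * b (z.1.2, z.2) / (prob' μ T z * c z.2)).symm
    _ ≤ ∑ z : (α × β) × γ, a (z.1.1, z.2) * b (z.1.2, z.2) / c z.2 := by
        refine sum_le_sum fun z _ => ?_
        rcases eq_or_ne (prob' μ T z) 0 with h0 | hne
        · rw [h0, zero_mul]
          exact div_nonneg (mul_nonneg (prob'_nonneg μ hμ0 _ _) (prob'_nonneg μ hμ0 _ _))
            (prob'_nonneg μ hμ0 _ _)
        · rw [mul_div_assoc', mul_div_mul_left _ _ hne]
    _ = ∑ w, c w := by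
        rw [Fintype.sum_prod_type, sum_comm]
        refine sum_congr rfl fun w _ => ?_
        rw [Fintype.sum_prod_type]
        simp_rw [← sum_div, ← sum_mul_sum]
        rw [ha, hb, sum_prob'_prodMk_left, sum_prob'_prodMk_left, mul_self_div_self]
    _ = ∑ ω, μ ω := sum_prob' μ W

theorem condMI'_nonneg (hμ0 : ∀ ω, 0 ≤ μ ω) : 0 ≤ condMI' μ U V W := by
  rw [condMI'_eq_neg_sum μ U V W hμ0, neg_nonneg]
  exact sum_mul_logb_nonpos univ hμ0 (fun ω => condProdRatio'_pos μ U V W hμ0)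
    (sum_mul_condProdRatio'_le μ U V W hμ0)

end MutualInformation

theorem isSubmodular_ent' {Ω : Type*} [Fintype Ω] (μ : Ω → ℝ) (hμ0 : ∀ ω, 0 ≤ μ ω)
    {ι κ : Type*} [DecidableEq ι] [Fintype κ] [DecidableEq κ] (Z : ι → Ω → κ) :
    IsSubmodular fun S : Finset ι => ent' μ fun ω (j : S) => Z j ω := by
  intro S T
  have h := condMI'_nonneg μ (fun ω (j : ↥(S \ T)) => Z j ω)
    (fun ω (j : ↥(T \ S)) => Z j ω) (fun ω (j : ↥(S ∩ T)) => Z j ω) hμ0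
  have hS : ent' μ (fun ω => ((fun j : ↥(S \ T) => Z j ω), fun j : ↥(S ∩ T) => Z j ω))
      = ent' μ fun ω (j : S) => Z j ω :=
    ent'_congr μ fun ω ω' => by
      simp only [Prod.mk.injEq, funext_iff, Subtype.forall, mem_sdiff, mem_inter]
      grind
  have hT : ent' μ (fun ω => ((fun j : ↥(T \ S) => Z j ω), fun j : ↥(S ∩ T) => Z j ω))
      = ent' μ fun ω (j : T) => Z j ω :=
    ent'_congr μ fun ω ω' => by
      simp only [Prod.mk.injEq, funext_iff, Subtype.forall, mem_sdiff, mem_inter]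
      grind
  have hST : ent' μ (fun ω => (((fun j : ↥(S \ T) => Z j ω), fun j : ↥(T \ S) => Z j ω),
        fun j : ↥(S ∩ T) => Z j ω))
      = ent' μ fun ω (j : ↥(S ∪ T)) => Z j ω :=
    ent'_congr μ fun ω ω' => by
      simp only [Prod.mk.injEq, funext_iff, Subtype.forall, mem_sdiff, mem_inter, mem_union]
      grind
  simp only [condMI', condEnt', hS, hT, hST] at h
  linarith

section Independence

variable {Ω : Type*} [Fintype Ω] (μ : Ω → ℝ)

def iIndepFun' {ι α : Type*} [Fintype ι] [DecidableEq α] (X : ι → Ω → α) : Prop :=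
  ∀ x : ι → α, prob' μ (fun ω i => X i ω) x = ∏ i, prob' μ (X i) (x i)

/-- `P(X = x, Y = y) = P(X = x) ∏ⱼ P(Y_j = y_j | X = x)`, multiplied out so that no division
occurs. -/
def iCondIndepFun' {γ κ β : Type*} [DecidableEq γ] [Fintype κ] [DecidableEq β] (X : Ω → γ)
    (Y : κ → Ω → β) : Prop :=
  ∀ (x : γ) (y : κ → β),
    prob' μ (fun ω => (X ω, fun j => Y j ω)) (x, y) * prob' μ X x ^ (Fintype.card κ - 1)
      = ∏ j, prob' μ (fun ω => (Y j ω, X ω)) (y j, x)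

theorem prob'_restrict_eq_prod (hμ1 : ∑ ω, μ ω = 1) {ι α : Type*} [Fintype ι] [DecidableEq ι]
    [Fintype α] [DecidableEq α] (X : ι → Ω → α) (hX : iIndepFun' μ X) (S : Finset ι) (g : S → α) :
    prob' μ (fun ω (j : S) => X j ω) g = ∏ j : S, prob' μ (X j) (g j) := by
  rw [prob'_comp μ (fun ω i => X i ω) (fun x (j : S) => x j), sum_congr rfl fun x _ => hX x,
    sum_prod_of_restrict_eq]
  simp only [sum_prob', hμ1, prod_const_one, mul_one]

theorem ent'_restrict_eq_sum (hμ0 : ∀ ω, 0 ≤ μ ω) (hμ1 : ∑ ω, μ ω = 1) {ι α : Type*}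
    [Fintype ι] [DecidableEq ι] [Fintype α] [DecidableEq α] (X : ι → Ω → α)
    (hX : iIndepFun' μ X) (S : Finset ι) :
    ent' μ (fun ω (j : S) => X j ω) = ∑ i ∈ S, ent' μ (X i) := by
  have hlog : ∀ ω, 0 < μ ω → Real.logb 2 (prob' μ (fun ω (j : S) => X j ω) fun j => X j ω)
      = ∑ j : S, Real.logb 2 (prob' μ (X j) (X j ω)) := fun ω hω => by
    rw [prob'_restrict_eq_prod μ hμ1 X hX,
      Real.logb_prod univ (fun j : S => prob' μ (X j) (X j ω)) fun j _ =>
        (prob'_self_pos μ hμ0 (X j) hω).ne']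
  rw [ent'_eq_neg_sum, sum_mul_congr_of_pos μ hμ0 hlog, ← sum_coe_sort S]
  simp only [ent'_eq_neg_sum, mul_sum, ← sum_neg_distrib]
  exact sum_comm

theorem prob'_prodMk_restrict_mul_pow {γ κ β : Type*} [Fintype γ] [DecidableEq γ] [Fintype κ]
    [DecidableEq κ] [Fintype β] [DecidableEq β] (X : Ω → γ) (Y : κ → Ω → β)
    (hY : iCondIndepFun' μ X Y) (S : Finset κ) (x : γ) (g : S → β) :
    prob' μ (fun ω => (X ω, fun j : S => Y j ω)) (x, g) * prob' μ X x ^ (Fintype.card κ - 1)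
      = (∏ j : S, prob' μ (fun ω => (Y j ω, X ω)) (g j, x))
        * prob' μ X x ^ (Fintype.card κ - #S) := by
  rw [prob'_prodMk_comp_right μ X (fun ω j => Y j ω) (fun y (j : S) => y j), sum_mul,
    sum_congr rfl fun y _ => hY x y,
    sum_prod_of_restrict_eq S g fun j t => prob' μ (fun ω => (Y j ω, X ω)) (t, x),
    prod_congr rfl fun j _ => sum_prob'_prodMk_left μ (Y j) X x, prod_const, card_compl]

theorem ent'_prodMk_restrict_eq (hμ0 : ∀ ω, 0 ≤ μ ω) {γ κ β : Type*} [Fintype γ]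
    [DecidableEq γ] [Fintype κ] [DecidableEq κ] [Fintype β] [DecidableEq β] (X : Ω → γ)
    (Y : κ → Ω → β) (hY : iCondIndepFun' μ X Y) (S : Finset κ) :
    ent' μ (fun ω => (X ω, fun j : S => Y j ω))
      = ∑ j ∈ S, ent' μ (fun ω => (Y j ω, X ω)) + ent' μ X - #S * ent' μ X := by
  -- for `S = ∅` the truncated exponent `card κ - 1` need not be cancellable (`κ` may be empty)
  rcases S.eq_empty_or_nonempty with rfl | hS
  · simp only [sum_empty, card_empty, Nat.cast_zero, zero_mul, zero_add, sub_zero]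
    exact ent'_congr μ fun ω ω' => by simp [funext_iff]
  have hcard : 1 ≤ #S ∧ #S ≤ Fintype.card κ := ⟨hS.card_pos, card_le_univ S⟩
  have hlog : ∀ ω, 0 < μ ω →
      Real.logb 2 (prob' μ (fun ω => (X ω, fun j : S => Y j ω)) (X ω, fun j => Y j ω))
        = ∑ j : S, Real.logb 2 (prob' μ (fun ω => (Y j ω, X ω)) (Y j ω, X ω))
          + Real.logb 2 (prob' μ X (X ω)) - #S * Real.logb 2 (prob' μ X (X ω)) := by
    intro ω hω
    have hP := (prob'_self_pos μ hμ0 X hω).ne'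
    have hprod : ∏ j : S, prob' μ (fun ω => (Y j ω, X ω)) (Y j ω, X ω) ≠ 0 :=
      prod_ne_zero_iff.mpr fun j _ => (prob'_self_pos μ hμ0 (fun ω => (Y j ω, X ω)) hω).ne'
    have h := congrArg (Real.logb 2)
      (prob'_prodMk_restrict_mul_pow μ X Y hY S (X ω) fun j => Y j ω)
    rw [Real.logb_mul (prob'_self_pos μ hμ0 (fun ω => (X ω, fun j : S => Y j ω)) hω).ne'
        (pow_ne_zero _ hP), Real.logb_mul hprod (pow_ne_zero _ hP),
      Real.logb_prod univ (fun j : S => prob' μ (fun ω => (Y j ω, X ω)) (Y j ω, X ω)) fun j _ =>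
        (prob'_self_pos μ hμ0 (fun ω => (Y j ω, X ω)) hω).ne',
      Real.logb_pow, Real.logb_pow, Nat.cast_sub (hcard.1.trans hcard.2), Nat.cast_sub hcard.2,
      Nat.cast_one] at h
    linarith
  rw [ent'_eq_neg_sum, sum_mul_congr_of_pos μ hμ0 hlog, ← sum_coe_sort S]
  simp only [ent'_eq_neg_sum, mul_add, mul_sub, mul_sum, sum_add_distrib, sum_sub_distrib,
    mul_left_comm (μ _), mul_neg, sum_neg_distrib]
  rw [sum_comm]
  ring

end Independence

theorem condMI'_cut_eq {Ω : Type*} [Fintype Ω] (μ : Ω → ℝ) (hμ0 : ∀ ω, 0 ≤ μ ω)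
    (hμ1 : ∑ ω, μ ω = 1) {ι α β : Type*} [Fintype ι] [DecidableEq ι] [Fintype α] [DecidableEq α]
    [Fintype β] [DecidableEq β] (X : ι → Ω → α) (Y : ι → Ω → β)
    (hX : iIndepFun' μ X) (hY : iCondIndepFun' μ (fun ω i => X i ω) Y) (A : Finset ι) :
    condMI' μ (fun ω (i : A) => X i ω) (fun ω (j : ↥Aᶜ) => Y j ω) (fun ω (i : ↥Aᶜ) => X i ω)
      = ent' μ (fun ω (j : ↥Aᶜ) => (X j ω, Y j ω))
        - ∑ j ∈ Aᶜ, (ent' μ (X j) + ent' μ (fun ω => (Y j ω, fun i => X i ω))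
          - ent' μ (fun ω i => X i ω)) := by
  have hX' : ent' μ (fun ω => ((fun i : A => X i ω), fun i : ↥Aᶜ => X i ω))
      = ent' μ fun ω i => X i ω :=
    ent'_congr μ fun ω ω' => by
      simp only [Prod.mk.injEq, funext_iff, Subtype.forall, mem_compl]
      grind
  have hXY : ent' μ (fun ω => ((fun j : ↥Aᶜ => Y j ω), fun i : ↥Aᶜ => X i ω))
      = ent' μ fun ω (j : ↥Aᶜ) => (X j ω, Y j ω) :=
    ent'_congr μ fun ω ω' => by
      simp only [Prod.mk.injEq, funext_iff, Subtype.forall]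
      grind
  have hXY' : ent' μ (fun ω => (((fun i : A => X i ω), fun j : ↥Aᶜ => Y j ω),
        fun i : ↥Aᶜ => X i ω))
      = ent' μ fun ω => ((fun i => X i ω), fun j : ↥Aᶜ => Y j ω) :=
    ent'_congr μ fun ω ω' => by
      simp only [Prod.mk.injEq, funext_iff, Subtype.forall, mem_compl]
      grind
  simp only [condMI', condEnt', hX', hXY, hXY']
  rw [ent'_restrict_eq_sum μ hμ0 hμ1 X hX,
    ent'_prodMk_restrict_eq μ hμ0 (fun ω i => X i ω) Y hY, sum_sub_distrib, sum_add_distrib,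
    sum_const, nsmul_eq_mul]
  ring

/-- If `X₁,…,Xₙ` are mutually independent and `Y₁,…,Yₙ` are conditionally
independent given `(X₁,…,Xₙ)` (expressed multiplicatively:
`P(X=x, Y=y)·P(X=x)^{n-1} = Π_j P(Y_j=y_j, X=x)`), then the cut-set function
`F(A) = I(X_A ; Y_{Aᶜ} | X_{Aᶜ})` is submodular. -/
theorem stmt_8 {Ω α β : Type*} [Fintype Ω] [Fintype α] [DecidableEq α]
    [Fintype β] [DecidableEq β] {n : ℕ}
    (μ : Ω → ℝ) (hμ0 : ∀ ω, 0 ≤ μ ω) (hμ1 : ∑ ω, μ ω = 1)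
    (X : Fin n → Ω → α) (Y : Fin n → Ω → β)
    (hX : ∀ x : Fin n → α,
      prob' μ (fun ω i => X i ω) x = ∏ i, prob' μ (X i) (x i))
    (hY : ∀ (x : Fin n → α) (y : Fin n → β),
      prob' μ (fun ω => ((fun i => X i ω), (fun j => Y j ω))) (x, y) *
          (prob' μ (fun ω i => X i ω) x) ^ (n - 1)
        = ∏ j, prob' μ (fun ω => (Y j ω, fun i => X i ω)) (y j, x))
    (F : Finset (Fin n) → ℝ)
    (hF : ∀ A : Finset (Fin n), F A =
      condMI' μ (fun ω (i : {i // i ∈ A}) => X i ω)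
        (fun ω (j : {j // j ∈ Aᶜ}) => Y j ω)
        (fun ω (i : {i // i ∈ Aᶜ}) => X i ω)) :
    ∀ A B : Finset (Fin n), F (A ∪ B) + F (A ∩ B) ≤ F A + F B := by
  have hcut := fun A => (hF A).trans <| condMI'_cut_eq μ hμ0 hμ1 X Y hX
    (by simpa only [iCondIndepFun', Fintype.card_fin] using hY) A
  intro A B
  simp only [hcut]
  exact ((isSubmodular_ent' μ hμ0 fun j ω => (X j ω, Y j ω)).sub_sum _).comp_compl A B
end

section
/- If f : 2^V → ℝ is submodular with f(∅) = 0, then the minimum of its Lovász extension g over the hypercube [0,1]^n equals the minimum of f over subsets of V: min_{x ∈ [0,1]^n} g(x) = min_{A ⊆ V} f(A). -/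
/-!
On each chamber `x (σ 0) ≥ ⋯ ≥ x (σ (n-1))` of the cube the Lovász extension is a combination
of the values `f (σ {0, …, i})` with nonnegative coefficients summing to `max x ≤ 1`; as
`min f ≤ f ∅ = 0`, this gives `g x ≥ min f`. Conversely `g` agrees with `f` at the indicator
vectors: the only chain set `σ {0, …, i}` with a nonzero coefficient is a level set of `x`.
-/

open Finset

namespace LovaszExtension

variable {n : ℕ}

theorem exists_perm_antitone (x : Fin n → ℝ) : ∃ σ : Equiv.Perm (Fin n), Antitone (x ∘ σ) :=
  ⟨Tuple.sort (fun i => -x i),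
    fun _ _ hij => neg_le_neg_iff.mp (Tuple.monotone_sort (fun i => -x i) hij)⟩

/-- The paper's `x(v_{k+1})` (indices shifted to start at `0`), including `x(v_{n+1}) := 0`. -/
def sortedCoord (x : Fin n → ℝ) (σ : Equiv.Perm (Fin n)) (k : ℕ) : ℝ :=
  if h : k < n then x (σ ⟨k, h⟩) else 0

def lovaszSum (f : Finset (Fin n) → ℝ) (x : Fin n → ℝ) (σ : Equiv.Perm (Fin n)) : ℝ :=
  ∑ i : Fin n, (sortedCoord x σ i - sortedCoord x σ (i + 1)) * f ((Iic i).image σ)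

theorem sum_eq_lovaszSum (f : Finset (Fin n) → ℝ) (x : Fin n → ℝ) (σ : Equiv.Perm (Fin n)) :
    ∑ i : Fin n, (x (σ i) - if h : (i : ℕ) + 1 < n then x (σ ⟨(i : ℕ) + 1, h⟩) else 0) *
      f ((Iic i).image σ) = lovaszSum f x σ := by
  simp [lovaszSum, sortedCoord]

variable {x : Fin n → ℝ} {σ : Equiv.Perm (Fin n)}

theorem sortedCoord_coe (i : Fin n) : sortedCoord x σ i = x (σ i) := by
  simp [sortedCoord]

theorem sortedCoord_nonneg (hx : ∀ v, 0 ≤ x v) (k : ℕ) : 0 ≤ sortedCoord x σ k := by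
  unfold sortedCoord
  split_ifs
  exacts [hx _, le_rfl]

theorem sortedCoord_le_one (hx : ∀ v, x v ≤ 1) (k : ℕ) : sortedCoord x σ k ≤ 1 := by
  unfold sortedCoord
  split_ifs
  exacts [hx _, zero_le_one]

theorem sortedCoord_succ_le (hσ : Antitone (x ∘ σ)) (hx : ∀ v, 0 ≤ x v) (k : ℕ) :
    sortedCoord x σ (k + 1) ≤ sortedCoord x σ k := by
  by_cases hk : k + 1 < n
  · simpa [sortedCoord, hk, Nat.lt_of_succ_lt hk] using
      hσ (show (⟨k, by omega⟩ : Fin n) ≤ ⟨k + 1, hk⟩ from Fin.mk_le_mk.mpr k.le_succ)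
  · rw [sortedCoord, dif_neg hk]
    exact sortedCoord_nonneg hx k

theorem sum_sortedCoord_sub :
    ∑ i : Fin n, (sortedCoord x σ i - sortedCoord x σ (i + 1)) = sortedCoord x σ 0 := by
  rw [Fin.sum_univ_eq_sum_range (fun k => sortedCoord x σ k - sortedCoord x σ (k + 1)),
    sum_range_sub', sub_eq_self]
  simp [sortedCoord]

theorem le_lovaszSum {f : Finset (Fin n) → ℝ} {m : ℝ} (hm : ∀ A, m ≤ f A) (hm0 : m ≤ 0)
    (hx : ∀ v, 0 ≤ x v ∧ x v ≤ 1) (hσ : Antitone (x ∘ σ)) : m ≤ lovaszSum f x σ := by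
  have hx0 : sortedCoord x σ 0 ≤ 1 := sortedCoord_le_one (fun v => (hx v).2) 0
  calc m ≤ sortedCoord x σ 0 * m := by nlinarith
    _ = ∑ i : Fin n, (sortedCoord x σ i - sortedCoord x σ (i + 1)) * m := by
      rw [← sum_mul, sum_sortedCoord_sub]
    _ ≤ lovaszSum f x σ := sum_le_sum fun i _ => mul_le_mul_of_nonneg_left (hm _)
      (sub_nonneg.mpr (sortedCoord_succ_le hσ (fun v => (hx v).1) i))

theorem image_Iic_eq_filter (hσ : Antitone (x ∘ σ)) {i : Fin n} {t : ℝ}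
    (hlt : sortedCoord x σ (i + 1) < t) (hle : t ≤ x (σ i)) :
    (Iic i).image σ = univ.filter fun v => t ≤ x v := by
  ext v
  obtain ⟨j, rfl⟩ := σ.surjective v
  rw [σ.injective.mem_finset_image, mem_Iic, mem_filter, and_iff_right (mem_univ _)]
  refine ⟨fun hji => hle.trans (hσ hji), fun htj => ?_⟩
  by_contra! hij
  have hi : (i : ℕ) + 1 < n := by omega
  have : x (σ j) ≤ sortedCoord x σ (i + 1) := by
    simpa [sortedCoord, hi] using hσ (show (⟨i + 1, hi⟩ : Fin n) ≤ j from Fin.mk_le_of_le_val hij)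
  linarith

theorem lovaszSum_indicator {f : Finset (Fin n) → ℝ} (hf : f ∅ = 0) {A : Finset (Fin n)}
    (hσ : Antitone ((fun v => if v ∈ A then (1 : ℝ) else 0) ∘ σ)) :
    lovaszSum f (fun v => if v ∈ A then 1 else 0) σ = f A := by
  set x : Fin n → ℝ := fun v => if v ∈ A then 1 else 0
  have hx0 : ∀ v, 0 ≤ x v := fun v => by unfold x; split_ifs <;> norm_num
  have hterm (i : Fin n) : (sortedCoord x σ i - sortedCoord x σ (i + 1)) * f ((Iic i).image σ)
      = (sortedCoord x σ i - sortedCoord x σ (i + 1)) * f A := by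
    rcases (sortedCoord_succ_le hσ hx0 i).eq_or_lt with heq | hlt
    · rw [heq, sub_self, zero_mul, zero_mul]
    rw [sortedCoord_coe] at hlt
    have hi : σ i ∈ A := by
      by_contra hi
      have := sortedCoord_nonneg (σ := σ) hx0 (i + 1)
      simp only [x, hi, if_false] at hlt
      linarith
    rw [image_Iic_eq_filter hσ hlt le_rfl]
    congr
    ext v
    by_cases hv : v ∈ A <;> simp [x, hi, hv]
  rw [lovaszSum, sum_congr rfl fun i _ => hterm i, ← sum_mul, sum_sortedCoord_sub]
  obtain rfl | ⟨a, ha⟩ := A.eq_empty_or_nonempty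
  · rw [hf, mul_zero]
  have hn : 0 < n := a.pos
  have h0 : σ ⟨0, hn⟩ ∈ A := by
    by_contra h0
    have := hσ (show (⟨0, hn⟩ : Fin n) ≤ σ.symm a from Nat.zero_le _)
    norm_num [x, ha, h0] at this
  simp [sortedCoord, hn, x, h0]

end LovaszExtension

open LovaszExtension

theorem stmt_16_general {n : ℕ} (f : Finset (Fin n) → ℝ) (hf : f ∅ = 0)
    (g : (Fin n → ℝ) → ℝ)
    (hg : ∀ (x : Fin n → ℝ) (σ : Equiv.Perm (Fin n)),
      (∀ i j : Fin n, i ≤ j → x (σ j) ≤ x (σ i)) →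
      g x = ∑ i : Fin n,
        (x (σ i) - if h : (i : ℕ) + 1 < n then x (σ ⟨(i : ℕ) + 1, h⟩) else 0) *
          f ((Finset.Iic i).image σ)) :
    (⨅ x : {x : Fin n → ℝ // ∀ i, 0 ≤ x i ∧ x i ≤ 1}, g x)
      = ⨅ A : Finset (Fin n), f A := by
  have hg' (x : Fin n → ℝ) :
      ∃ σ : Equiv.Perm (Fin n), Antitone (x ∘ σ) ∧ g x = lovaszSum f x σ := by
    obtain ⟨σ, hσ⟩ := exists_perm_antitone x
    exact ⟨σ, hσ, (hg x σ hσ).trans (sum_eq_lovaszSum f x σ)⟩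
  obtain ⟨A₀, hA₀⟩ := Finite.exists_min f
  have hmin : IsLeast (Set.range f) (f A₀) := ⟨⟨A₀, rfl⟩, Set.forall_mem_range.mpr hA₀⟩
  rw [show (⨅ A, f A) = f A₀ from hmin.csInf_eq]
  refine IsLeast.csInf_eq ⟨⟨⟨fun v => if v ∈ A₀ then 1 else 0, fun v => ?_⟩, ?_⟩, ?_⟩
  · dsimp only
    split_ifs <;> norm_num
  · obtain ⟨σ, hσ, hgx⟩ := hg' _
    exact hgx.trans (lovaszSum_indicator hf hσ)
  · rintro _ ⟨⟨x, hx⟩, rfl⟩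
    obtain ⟨σ, hσ, hgx⟩ := hg' x
    exact (le_lovaszSum hA₀ (hf ▸ hA₀ ∅) hx hσ).trans_eq hgx.symm

/-- For a submodular `f` with `f(∅)=0`, the minimum of its Lovász extension `g`
over the hypercube `[0,1]^n` equals the minimum of `f` over all subsets. -/
theorem stmt_16 {n : ℕ} (f : Finset (Fin n) → ℝ) (hf : f ∅ = 0)
    (hsub : ∀ A B : Finset (Fin n), f (A ∪ B) + f (A ∩ B) ≤ f A + f B)
    (g : (Fin n → ℝ) → ℝ)
    (hg : ∀ (x : Fin n → ℝ) (σ : Equiv.Perm (Fin n)),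
      (∀ i j : Fin n, i ≤ j → x (σ j) ≤ x (σ i)) →
      g x = ∑ i : Fin n,
        (x (σ i) - if h : (i : ℕ) + 1 < n then x (σ ⟨(i : ℕ) + 1, h⟩) else 0) *
          f ((Finset.Iic i).image σ)) :
    (⨅ x : {x : Fin n → ℝ // ∀ i, 0 ≤ x i ∧ x i ≤ 1}, g x)
      = ⨅ A : Finset (Fin n), f A :=
  stmt_16_general f hf g hg
end

section
/- If f : 2^V → ℝ is submodular with f(∅) = 0, then its Lovász extension g : [0,1]^n → ℝ is a convex function. -/
/-!
For a permutation `σ`, the greedy vector `w_σ` gives `σ k` the marginal value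
`f (σ {0, …, k}) - f (σ {0, …, k-1})`. Edmonds' greedy argument (peel off the element of `A` that
comes last in `σ` and apply submodularity) shows `∑ e ∈ A, w_σ e ≤ f A` for every `A`, with
equality on the chain sets `σ {0, …, k}`. Abel summation writes the Lovász sum of `x` sorted by `σ`
as a combination of these chain values with the coefficients `λ_i`, which are nonnegative when
`x ≥ 0`. Hence `g x = ⟪w_σ, x⟫` and `⟪w_τ, x⟫ ≤ g x` for every `τ`: on the cube `g` is the
maximum of the linear forms `⟪w_τ, ·⟫`, so it is convex.
-/

open Finset

section Chain

variable {α : Type*} [LinearOrder α] [LocallyFiniteOrderBot α]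

def chainGain (F : Finset α → ℝ) (a : α) : ℝ := F (Iic a) - F (Iio a)

variable {F : Finset α → ℝ}

theorem sum_chainGain_le (hF₀ : F ∅ = 0)
    (hF : ∀ A B, F (A ∪ B) + F (A ∩ B) ≤ F A + F B) (B : Finset α) :
    ∑ a ∈ B, chainGain F a ≤ F B := by
  induction B using Finset.induction_on_max with
  | empty => simp [hF₀]
  | insert a s hlt ih =>
    have hs : s ⊆ Iio a := fun x hx => mem_Iio.2 (hlt x hx)
    have ha : a ∉ Iio a := notMem_Iio_self
    have hunion : insert a s ∪ Iio a = Iic a := by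
      rw [insert_union, union_eq_right.2 hs, Iio_insert]
    have hinter : insert a s ∩ Iio a = s := by
      rw [insert_inter_of_notMem ha, inter_eq_left.2 hs]
    have := hF (insert a s) (Iio a)
    rw [hunion, hinter] at this
    rw [sum_insert fun h => ha (hs h), chainGain]
    linarith

theorem sum_chainGain_eq_of_isLowerSet (hF₀ : F ∅ = 0) {B : Finset α}
    (hB : IsLowerSet (B : Set α)) : ∑ a ∈ B, chainGain F a = F B := by
  induction B using Finset.induction_on_max with
  | empty => simp [hF₀]
  | insert a s hlt ih =>
    have hIio : Iio a = s := by
      ext x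
      refine ⟨fun hx => ?_, fun hx => mem_Iio.2 (hlt x hx)⟩
      have hxa := mem_Iio.1 hx
      have := hB hxa.le (by simp : a ∈ (↑(insert a s) : Set α))
      simpa [hxa.ne] using this
    have hs : IsLowerSet (s : Set α) := by
      rw [← hIio, coe_Iio]
      exact isLowerSet_Iio a
    rw [sum_insert fun h => (lt_irrefl a) (hlt a h), ih hs, chainGain, ← Iio_insert, hIio]
    ring

end Chain

section GreedyVertex

variable {α β : Type*} [LinearOrder α] [LocallyFiniteOrderBot α] [DecidableEq β]

def greedyVertex (f : Finset β → ℝ) (σ : α ≃ β) (e : β) : ℝ :=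
  chainGain (fun B => f (B.image σ)) (σ.symm e)

variable {f : Finset β → ℝ}

theorem sum_greedyVertex_le (hf₀ : f ∅ = 0)
    (hf : ∀ A B, f (A ∪ B) + f (A ∩ B) ≤ f A + f B) (σ : α ≃ β) (A : Finset β) :
    ∑ e ∈ A, greedyVertex f σ e ≤ f A := by
  have hF : ∀ A B : Finset α, f ((A ∪ B).image σ) + f ((A ∩ B).image σ)
      ≤ f (A.image σ) + f (B.image σ) := fun A B => by
    rw [image_union, image_inter _ _ σ.injective]
    exact hf _ _
  have := sum_chainGain_le (F := fun B => f (B.image σ)) (by simpa using hf₀) hF (A.image σ.symm)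
  rwa [sum_image fun _ _ _ _ h => σ.symm.injective h, image_image, σ.self_comp_symm,
    image_id] at this

theorem sum_greedyVertex_image_Iic (hf₀ : f ∅ = 0) (σ : α ≃ β) (i : α) :
    ∑ e ∈ (Iic i).image σ, greedyVertex f σ e = f ((Iic i).image σ) := by
  rw [sum_image fun _ _ _ _ h => σ.injective h]
  simp only [greedyVertex, Equiv.symm_apply_apply]
  exact sum_chainGain_eq_of_isLowerSet (F := fun B => f (B.image σ)) (by simpa using hf₀)
    (by rw [coe_Iic]; exact isLowerSet_Iic i)

end GreedyVertex

section Fin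

variable {n : ℕ}

def gap (y : Fin n → ℝ) (i : Fin n) : ℝ :=
  y i - if h : (i : ℕ) + 1 < n then y ⟨i + 1, h⟩ else 0

theorem sum_Ici_gap (y : Fin n → ℝ) (k : Fin n) : ∑ i ∈ Ici k, gap y i = y k := by
  set Y : ℕ → ℝ := fun m => if h : m < n then y ⟨m, h⟩ else 0
  have hgap : ∀ i : Fin n, gap y i = -(Y (i + 1) - Y i) := fun i => by
    simp [gap, Y, i.isLt]
  have hYn : Y n = 0 := by simp [Y]
  have hYk : Y k = y k := by simp [Y, k.isLt]
  have htel : ∑ i ∈ Ici k, (Y (i + 1) - Y i) = Y n - Y k := by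
    rw [← sum_Ico_sub Y k.isLt.le, ← Fin.map_valEmbedding_Ici, sum_map]
    rfl
  simp_rw [hgap]
  rw [sum_neg_distrib, htel, hYn, hYk]
  ring

theorem sum_gap_mul_sum_Iic (y c : Fin n → ℝ) :
    ∑ i, gap y i * ∑ k ∈ Iic i, c k = ∑ k, c k * y k := by
  simp_rw [mul_sum]
  rw [sum_comm' (t' := univ) (s' := Ici) (by simp)]
  simp_rw [← sum_mul, sum_Ici_gap, mul_comm]

theorem gap_nonneg {y : Fin n → ℝ} (hy₀ : ∀ i, 0 ≤ y i) (hy : Antitone y) (i : Fin n) :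
    0 ≤ gap y i := by
  unfold gap
  split_ifs
  · exact sub_nonneg.2 (hy (Fin.le_def.2 (Nat.le_succ _)))
  · simpa using hy₀ i

end Fin

section LovaszExtension

variable {n : ℕ} {f : Finset (Fin n) → ℝ}

def lovaszSum (f : Finset (Fin n) → ℝ) (x : Fin n → ℝ) (σ : Equiv.Perm (Fin n)) : ℝ :=
  ∑ i, gap (x ∘ σ) i * f ((Iic i).image σ)

theorem lovaszSum_eq_greedyVertex_dotProduct (hf₀ : f ∅ = 0) (x : Fin n → ℝ)
    (σ : Equiv.Perm (Fin n)) : lovaszSum f x σ = greedyVertex f σ ⬝ᵥ x := by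
  simp_rw [lovaszSum, ← sum_greedyVertex_image_Iic hf₀ σ, sum_image σ.injective.injOn,
    sum_gap_mul_sum_Iic]
  exact Equiv.sum_comp σ fun e => greedyVertex f σ e * x e

theorem greedyVertex_dotProduct_le_lovaszSum (hf₀ : f ∅ = 0)
    (hf : ∀ A B, f (A ∪ B) + f (A ∩ B) ≤ f A + f B) (τ : Equiv.Perm (Fin n))
    {x : Fin n → ℝ} (hx₀ : ∀ e, 0 ≤ x e) {σ : Equiv.Perm (Fin n)} (hσ : Antitone (x ∘ σ)) :
    greedyVertex f τ ⬝ᵥ x ≤ lovaszSum f x σ := calc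
  greedyVertex f τ ⬝ᵥ x = ∑ i, gap (x ∘ σ) i * ∑ e ∈ (Iic i).image σ, greedyVertex f τ e := by
    simp_rw [sum_image σ.injective.injOn, sum_gap_mul_sum_Iic]
    exact (Equiv.sum_comp σ fun e => greedyVertex f τ e * x e).symm
  _ ≤ lovaszSum f x σ := sum_le_sum fun i _ => mul_le_mul_of_nonneg_left
    (sum_greedyVertex_le hf₀ hf τ _) (gap_nonneg (fun _ => hx₀ _) hσ i)

theorem exists_perm_antitone (x : Fin n → ℝ) : ∃ σ : Equiv.Perm (Fin n), Antitone (x ∘ σ) :=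
  ⟨Tuple.sort (OrderDual.toDual ∘ x), Tuple.monotone_sort (OrderDual.toDual ∘ x)⟩

end LovaszExtension

/-- For a submodular `f` with `f(∅)=0`, the Lovász extension `g` is convex on the
hypercube `[0,1]^n`. -/
theorem stmt_17 {n : ℕ} (f : Finset (Fin n) → ℝ) (hf : f ∅ = 0)
    (hsub : ∀ A B : Finset (Fin n), f (A ∪ B) + f (A ∩ B) ≤ f A + f B)
    (g : (Fin n → ℝ) → ℝ)
    (hg : ∀ (x : Fin n → ℝ) (σ : Equiv.Perm (Fin n)),
      (∀ i j : Fin n, i ≤ j → x (σ j) ≤ x (σ i)) →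
      g x = ∑ i : Fin n,
        (x (σ i) - if h : (i : ℕ) + 1 < n then x (σ ⟨(i : ℕ) + 1, h⟩) else 0) *
          f ((Finset.Iic i).image σ)) :
    ConvexOn ℝ {x : Fin n → ℝ | ∀ i, 0 ≤ x i ∧ x i ≤ 1} g := by
  have hcube : {x : Fin n → ℝ | ∀ i, 0 ≤ x i ∧ x i ≤ 1} = Set.univ.pi fun _ => Set.Icc 0 1 := by
    ext; simp only [Set.mem_ofPred_eq, Set.mem_univ_pi, Set.mem_Icc]
  have hg_lovasz : ∀ x (σ : Equiv.Perm (Fin n)), Antitone (x ∘ σ) → g x = lovaszSum f x σ :=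
    fun x σ hσ => hg x σ fun _ _ hij => hσ hij
  have hg_le : ∀ x ∈ {x : Fin n → ℝ | ∀ i, 0 ≤ x i ∧ x i ≤ 1}, ∀ τ,
      greedyVertex f τ ⬝ᵥ x ≤ g x := fun x hx τ => by
    obtain ⟨σ, hσ⟩ := exists_perm_antitone x
    rw [hg_lovasz x σ hσ]
    exact greedyVertex_dotProduct_le_lovaszSum hf hsub τ (fun e => (hx e).1) hσ
  refine ⟨hcube ▸ convex_pi fun _ _ => convex_Icc 0 1, fun x hx y hy a b ha hb _ => ?_⟩
  obtain ⟨σ, hσ⟩ := exists_perm_antitone (a • x + b • y)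
  calc g (a • x + b • y) = a • (greedyVertex f σ ⬝ᵥ x) + b • (greedyVertex f σ ⬝ᵥ y) := by
        rw [hg_lovasz _ σ hσ, lovaszSum_eq_greedyVertex_dotProduct hf, dotProduct_add,
          dotProduct_smul, dotProduct_smul]
    _ ≤ a • g x + b • g y := by
        gcongr
        exacts [hg_le x hx σ, hg_le y hy σ]
end
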